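/- Let V_1,…,V_N (N ≥ 2) be nonempty, closed, pairwise disjoint subsets of a compact metric space X, and let f_{0,∞} be a sequence of continuous self-maps such that f_n(V_i) ⊇ V_1 ∪ ⋯ ∪ V_N for all 1 ≤ i ≤ N and n ≥ 0 (coupled-expansion). Then h_A(f_{0,∞}) ≥ log N for every increasing sequence A of nonnegative integers. -/

import Mathlib

open Filter Set MeasureTheory

/-- `nacomp f i n = f (i+n-1) ∘ ⋯ ∘ f i`, the `n`-fold composition of the
nonautonomous system starting at index `i`. -/
def nacomp {X : Type*} (f : ℕ → X → X) (i : ℕ) : ℕ → X → X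
  | 0 => id
  | n + 1 => f (i + n) ∘ nacomp f i n

/-- `E` is an `(n, ε, A)`-separated subset of `Λ` for the nonautonomous system `f`. -/
def IsSepSet {X : Type*} [PseudoMetricSpace X] (f : ℕ → X → X) (A : ℕ → ℕ) (n : ℕ)
    (ε : ℝ) (Λ : Set X) (E : Finset X) : Prop :=
  ↑E ⊆ Λ ∧ ∀ x ∈ E, ∀ y ∈ E, x ≠ y →
    ∃ j : Fin n, ε < dist (nacomp f 0 (A j) x) (nacomp f 0 (A j) y)

/-- `s_n(ε, A, f, Λ)`: maximal cardinality of an `(n,ε,A)`-separated subset of `Λ`. -/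
noncomputable def maxSep {X : Type*} [PseudoMetricSpace X] (f : ℕ → X → X) (A : ℕ → ℕ)
    (n : ℕ) (ε : ℝ) (Λ : Set X) : ℕ :=
  sSup {m | ∃ E : Finset X, IsSepSet f A n ε Λ E ∧ E.card = m}

/-- Topological sequence entropy of `f` on `Λ` along `A`, via separated sets:
`lim_{ε → 0} limsup_n (1/n) log s_n(ε,A,f,Λ)`, the limit realized as a supremum over `ε > 0`. -/
noncomputable def sepEnt {X : Type*} [PseudoMetricSpace X] (f : ℕ → X → X) (A : ℕ → ℕ)
    (Λ : Set X) : EReal :=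
  ⨆ ε : {ε : ℝ // 0 < ε},
    limsup (fun n : ℕ => ((Real.log (maxSep f A n ε Λ) / n : ℝ) : EReal)) atTop

/-- A finite open cover of the whole space. -/
def IsFinOpenCover {X : Type*} [TopologicalSpace X] (𝒜 : Finset (Set X)) : Prop :=
  (∀ u ∈ 𝒜, IsOpen u) ∧ ⋃₀ ↑𝒜 = (univ : Set X)

/-- A cell `⋂_j (f_0^{a_j})⁻¹ (u j)` of the join `⋁_{j} f_0^{-a_j} 𝒜`. -/
def seqCell {X : Type*} (f : ℕ → X → X) (A : ℕ → ℕ) (n : ℕ) (u : Fin n → Set X) : Set X :=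
  ⋂ j : Fin n, nacomp f 0 (A j.1) ⁻¹' (u j)

/-- `N((⋁_{j=1}^n f_0^{-a_j} 𝒜)|_Λ)`: the minimal cardinality of a subfamily of the join
cover whose union contains `Λ`. -/
noncomputable def coverN {X : Type*} (f : ℕ → X → X) (A : ℕ → ℕ) (n : ℕ) (Λ : Set X)
    (𝒜 : Finset (Set X)) : ℕ :=
  sInf {m | ∃ S : Finset (Fin n → Set X), (∀ u ∈ S, ∀ j, u j ∈ 𝒜) ∧
    (Λ ⊆ ⋃ u ∈ S, seqCell f A n u) ∧ S.card = m}

/-- `h_A(f, Λ, 𝒜)`, the sequence entropy of `f` on `Λ` relative to the open cover `𝒜`. -/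
noncomputable def coverEntOf {X : Type*} (f : ℕ → X → X) (A : ℕ → ℕ) (Λ : Set X)
    (𝒜 : Finset (Set X)) : EReal :=
  limsup (fun n : ℕ => ((Real.log (coverN f A n Λ 𝒜) / n : ℝ) : EReal)) atTop

/-- `h_A(f, Λ)`: topological sequence entropy via open covers. -/
noncomputable def coverEnt {X : Type*} [TopologicalSpace X] (f : ℕ → X → X) (A : ℕ → ℕ)
    (Λ : Set X) : EReal :=
  ⨆ 𝒜 : {𝒜 : Finset (Set X) // IsFinOpenCover 𝒜}, coverEntOf f A Λ 𝒜

/-- The supremum topological sequence entropy `h*(f) = sup_A h_A(f)`. -/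
noncomputable def supSeqEnt {X : Type*} [PseudoMetricSpace X] (f : ℕ → X → X) : EReal :=
  ⨆ A : {A : ℕ → ℕ // StrictMono A}, sepEnt f A univ

/-- The `n`-th compositions system `f_{0,∞}^n`, whose `k`-th map is `f_{kn}^n`. -/
def compSys {X : Type*} (f : ℕ → X → X) (n : ℕ) : ℕ → X → X :=
  fun k => nacomp f (k * n) n

/-- A finite measurable partition of the space. -/
def IsFinMeasPartition {X : Type*} [MeasurableSpace X] (P : Finset (Set X)) : Prop :=
  (∀ s ∈ P, MeasurableSet s) ∧ ((P : Set (Set X)).PairwiseDisjoint id) ∧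
    ⋃₀ ↑P = (univ : Set X)

/-- `h_{A,μ}(f, P) = limsup (1/n) H_μ(⋁_{j=1}^n f_0^{-a_j} P)`. -/
noncomputable def measSeqEntPart {X : Type*} [MeasurableSpace X] (μ : Measure X)
    (f : ℕ → X → X) (A : ℕ → ℕ) (P : Finset (Set X)) : EReal :=
  limsup (fun n : ℕ =>
    (((∑ u : Fin n → {s // s ∈ P},
        Real.negMulLog (μ (seqCell f A n (fun j => (u j : Set X)))).toReal) / n : ℝ) : EReal))
    atTop

/-- The measure-theoretic sequence entropy `h_{A,μ}(f)`. -/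
noncomputable def measSeqEnt {X : Type*} [MeasurableSpace X] (μ : Measure X)
    (f : ℕ → X → X) (A : ℕ → ℕ) : EReal :=
  ⨆ P : {P : Finset (Set X) // IsFinMeasPartition P}, measSeqEntPart μ f A P

/-- Covering dimension at most `d`: every finite open cover has a finite open refinement
of order at most `d + 1`. -/
def HasCovDimLE (X : Type*) [TopologicalSpace X] (d : ℕ) : Prop :=
  ∀ 𝒜 : Finset (Set X), IsFinOpenCover 𝒜 → ∃ ℬ : Finset (Set X), IsFinOpenCover ℬ ∧
    (∀ v ∈ ℬ, ∃ u ∈ 𝒜, v ⊆ u) ∧ ∀ x : X, ({v : Set X | v ∈ ℬ ∧ x ∈ v}).ncard ≤ d + 1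

/-- The induced nonautonomous system `f̂` on the space of Borel probability measures,
carrying the Lévy–Prokhorov (Prohorov) metric: `f̂ n μ = (f n)_* μ`. -/
noncomputable def inducedSys {X : Type*} [MeasurableSpace X] (f : ℕ → X → X)
    (hf : ∀ n, Measurable (f n)) :
    ℕ → LevyProkhorov (ProbabilityMeasure X) → LevyProkhorov (ProbabilityMeasure X) :=
  fun n μ => (LevyProkhorov.toMeasureEquiv (α := ProbabilityMeasure X)).symm
    (((LevyProkhorov.toMeasureEquiv (α := ProbabilityMeasure X)) μ).map (hf n).aemeasurable)

/-- Multi-sensitivity of a nonautonomous system. -/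
def MultiSensitive {X : Type*} [PseudoMetricSpace X] (f : ℕ → X → X) : Prop :=
  ∃ δ : ℝ, 0 < δ ∧ ∀ (k : ℕ) (V : Fin k → Set X),
    (∀ i, IsOpen (V i)) → (∀ i, (V i).Nonempty) →
      ∃ n : ℕ, 1 ≤ n ∧ ∀ i, δ < Metric.diam (nacomp f 0 n '' V i)

/-!
Coupled expansion realises every itinerary: pulling a point of the last prescribed set back one
map at a time, through the earlier prescribed sets, gives a point whose orbit lies in `V (w j)`
at time `a_j` for each `j < n`. The `N ^ n` words `w` thus give `N ^ n` points; since distinct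
`V i` are disjoint compact sets, they are at distance at least some `δ > 0`, so these points are
`(n, δ/2, A)`-separated. Hence `s_n(δ/2) ≥ N ^ n` and the entropy is at least `log N`.
-/

open Function Topology

theorem Metric.exists_pos_forall_le_dist_of_pairwise_disjoint {X ι : Type*} [MetricSpace X]
    [Finite ι] {V : ι → Set X} (hV : ∀ i, IsCompact (V i)) (hd : Pairwise (Disjoint on V)) :
    ∃ δ > 0, ∀ i j, i ≠ j → ∀ x ∈ V i, ∀ y ∈ V j, δ ≤ dist x y := by
  have hpair : ∀ p : ι × ι, ∀ᶠ δ in 𝓝[>] (0 : ℝ),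
      p.1 ≠ p.2 → ∀ x ∈ V p.1, ∀ y ∈ V p.2, δ ≤ dist x y := by
    rintro ⟨i, j⟩
    by_cases hij : i = j
    · exact .of_forall fun _ h => absurd hij h
    obtain ⟨r, hr, hlt⟩ := exists_pos_forall_lt_edist (hV i) (hV j).isClosed (hd hij)
    filter_upwards [Ioo_mem_nhdsGT (NNReal.coe_pos.2 hr)] with δ hδ _ x hx y hy
    have := hlt x hx y hy
    rw [edist_dist, ENNReal.lt_ofReal_iff_toReal_lt ENNReal.coe_ne_top, ENNReal.coe_toReal] at this
    linarith [hδ.2]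
  obtain ⟨δ, hδ, hpos⟩ := ((eventually_all.2 hpair).and self_mem_nhdsWithin).exists
  exact ⟨δ, hpos, fun i j hij => hδ (i, j) hij⟩

section SeparatedSets

variable {X : Type*} [PseudoMetricSpace X] [CompactSpace X] {f : ℕ → X → X} {A : ℕ → ℕ} {n : ℕ}
  {ε : ℝ} {Λ : Set X}

/-- Points of a separated set have distinct itineraries through a finite `ε/2`-net. -/
theorem bddAbove_card_isSepSet (hε : 0 < ε) :
    BddAbove {m | ∃ E : Finset X, IsSepSet f A n ε Λ E ∧ E.card = m} := by
  obtain ⟨t, -, htfin, htcov⟩ :=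
    finite_cover_balls_of_compact (isCompact_univ (X := X)) (half_pos hε)
  have : Fintype t := htfin.fintype
  have hnet : ∀ x : X, ∃ c : t, dist x c < ε / 2 := fun x => by
    obtain ⟨c, hct, hxc⟩ := mem_iUnion₂.1 (htcov (mem_univ x))
    exact ⟨⟨c, hct⟩, hxc⟩
  choose g hg using hnet
  refine ⟨Fintype.card (Fin n → t), ?_⟩
  rintro _ ⟨E, ⟨-, hsep⟩, rfl⟩
  have hinj : InjOn (fun x (j : Fin n) => g (nacomp f 0 (A j) x)) E := by
    intro x hx y hy hxy
    by_contra hne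
    obtain ⟨j, hj⟩ := hsep x hx y hy hne
    set p := nacomp f 0 (A j)
    have hgj : g (p x) = g (p y) := congrFun hxy j
    have hclose : dist (p x) (p y) < ε := calc
      dist (p x) (p y) ≤ dist (p x) (g (p x)) + dist (g (p y) : X) (p y) := by
        rw [hgj]; exact dist_triangle _ _ _
      _ < ε / 2 + ε / 2 := add_lt_add (hg _) (by rw [dist_comm]; exact hg _)
      _ = ε := add_halves ε
    exact hclose.not_gt hj
  calc E.card ≤ (Finset.univ : Finset (Fin n → t)).card :=
        Finset.card_le_card_of_injOn _ (fun _ _ => Finset.mem_coe.2 (Finset.mem_univ _)) hinj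
    _ = Fintype.card (Fin n → t) := Finset.card_univ

theorem IsSepSet.card_le_maxSep {E : Finset X} (hE : IsSepSet f A n ε Λ E) (hε : 0 < ε) :
    E.card ≤ maxSep f A n ε Λ :=
  le_csSup (bddAbove_card_isSepSet (X := X) hε) ⟨E, hE, rfl⟩

end SeparatedSets

theorem log_le_sepEnt_of_eventually_pow_le {X : Type*} [PseudoMetricSpace X] {f : ℕ → X → X}
    {A : ℕ → ℕ} {Λ : Set X} {K ε : ℝ} (hK : 0 < K) (hε : 0 < ε)
    (h : ∀ᶠ n in atTop, K ^ n ≤ maxSep f A n ε Λ) : (Real.log K : EReal) ≤ sepEnt f A Λ := by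
  refine le_iSup_of_le (⟨ε, hε⟩ : {ε : ℝ // 0 < ε}) (le_limsup_of_frequently_le' ?_)
  refine ((h.and (eventually_gt_atTop 0)).mono fun n ⟨hpow, hn⟩ => ?_).frequently
  rw [EReal.coe_le_coe_iff, le_div_iff₀ (Nat.cast_pos.2 hn), mul_comm, ← Real.log_pow]
  exact Real.log_le_log (pow_pos hK n) hpow

def IsCoupledExpanding {X ι : Type*} (f : ℕ → X → X) (V : ι → Set X) : Prop :=
  ∀ n i, (⋃ j, V j) ⊆ f n '' V i

namespace IsCoupledExpanding

variable {X ι : Type*} {f : ℕ → X → X} {V : ι → Set X}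

theorem subset_image_itinerary (h : IsCoupledExpanding f V) (W : ℕ → ι) (m : ℕ) :
    V (W m) ⊆ nacomp f 0 m '' {x | ∀ k ≤ m, nacomp f 0 k x ∈ V (W k)} := by
  induction m with
  | zero =>
    intro z hz
    exact ⟨z, fun k hk => by rwa [Nat.le_zero.1 hk], rfl⟩
  | succ m ih =>
    intro z hz
    obtain ⟨y, hy, rfl⟩ := h m (W m) (mem_iUnion_of_mem (W (m + 1)) hz)
    obtain ⟨x, hx, rfl⟩ := ih hy
    have hstep : nacomp f 0 (m + 1) x = f m (nacomp f 0 m x) := by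
      simp only [nacomp, zero_add, comp_apply]
    refine ⟨x, fun k hk => ?_, hstep⟩
    rcases hk.lt_or_eq with hk | rfl
    · exact hx k (Nat.lt_succ_iff.1 hk)
    · rwa [hstep]

theorem exists_forall_nacomp_mem (h : IsCoupledExpanding f V) (hne : ∀ i, (V i).Nonempty)
    {A : ℕ → ℕ} (hA : StrictMono A) {n : ℕ} (hn : 0 < n) (w : Fin n → ι) :
    ∃ x, ∀ j : Fin n, nacomp f 0 (A j) x ∈ V (w j) := by
  have hinj : Injective fun j : Fin n => A j := hA.injective.comp Fin.val_injective
  set W := extend (fun j : Fin n => A j) w fun _ => w ⟨0, hn⟩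
  obtain ⟨x, hx, -⟩ := h.subset_image_itinerary W (A (n - 1)) (hne _).some_mem
  refine ⟨x, fun j => ?_⟩
  rw [← hinj.extend_apply w (fun _ => w ⟨0, hn⟩) j]
  exact hx (A j) (hA.monotone (by omega))

theorem exists_pos_card_pow_le_maxSep [MetricSpace X] [CompactSpace X] [Fintype ι]
    (h : IsCoupledExpanding f V) (hne : ∀ i, (V i).Nonempty) (hV : ∀ i, IsCompact (V i))
    (hd : Pairwise (Disjoint on V)) {A : ℕ → ℕ} (hA : StrictMono A) :
    ∃ ε > 0, ∀ n, 0 < n → Fintype.card ι ^ n ≤ maxSep f A n ε univ := by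
  classical
  obtain ⟨δ, hδ, hsep⟩ := Metric.exists_pos_forall_le_dist_of_pairwise_disjoint hV hd
  refine ⟨δ / 2, half_pos hδ, fun n hn => ?_⟩
  choose x hx using h.exists_forall_nacomp_mem hne hA hn
  have hx_inj : Injective x := by
    intro w w' hww'
    by_contra hne'
    obtain ⟨j, hj⟩ := ne_iff.1 hne'
    exact disjoint_left.1 (hd hj) (hx w j) (hww' ▸ hx w' j)
  have hE : IsSepSet f A n (δ / 2) univ (Finset.univ.image x) := by
    refine ⟨subset_univ _, ?_⟩
    simp only [Finset.mem_image, Finset.mem_univ, true_and]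
    rintro _ ⟨w, rfl⟩ _ ⟨w', rfl⟩ hww'
    obtain ⟨j, hj⟩ := ne_iff.1 (ne_of_apply_ne x hww')
    exact ⟨j, (half_lt_self hδ).trans_le (hsep _ _ hj _ (hx w j) _ (hx w' j))⟩
  calc Fintype.card ι ^ n = (Finset.univ.image x).card := by
        rw [Finset.card_image_of_injective _ hx_inj, Finset.card_univ, Fintype.card_fun,
          Fintype.card_fin]
    _ ≤ maxSep f A n (δ / 2) univ := hE.card_le_maxSep (half_pos hδ)

end IsCoupledExpanding

theorem sepEnt_coupled_expanding_general {X : Type*} [MetricSpace X] [CompactSpace X]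
    (f : ℕ → X → X)
    (N : ℕ) (hN : 2 ≤ N) (V : Fin N → Set X)
    (hne : ∀ i, (V i).Nonempty) (hcl : ∀ i, IsClosed (V i))
    (hdisj : ∀ i j, i ≠ j → Disjoint (V i) (V j))
    (hexp : ∀ (n : ℕ) (i : Fin N), (⋃ j, V j) ⊆ f n '' (V i))
    (A : ℕ → ℕ) (hA : StrictMono A) :
    (Real.log N : EReal) ≤ sepEnt f A univ := by
  obtain ⟨ε, hε, hpow⟩ := IsCoupledExpanding.exists_pos_card_pow_le_maxSep hexp hne
    (fun i => (hcl i).isCompact) hdisj hA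
  refine log_le_sepEnt_of_eventually_pow_le (Nat.cast_pos.2 (by omega)) hε ?_
  filter_upwards [eventually_gt_atTop 0] with n hn
  exact_mod_cast Fintype.card_fin N ▸ hpow n hn

/-- A coupled-expanding nonautonomous system on `N` disjoint closed sets has sequence
entropy at least `log N` along every sequence. -/
theorem sepEnt_coupled_expanding {X : Type*} [MetricSpace X] [CompactSpace X]
    (f : ℕ → X → X) (hf : ∀ n, Continuous (f n))
    (N : ℕ) (hN : 2 ≤ N) (V : Fin N → Set X)
    (hne : ∀ i, (V i).Nonempty) (hcl : ∀ i, IsClosed (V i))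
    (hdisj : ∀ i j, i ≠ j → Disjoint (V i) (V j))
    (hexp : ∀ (n : ℕ) (i : Fin N), (⋃ j, V j) ⊆ f n '' (V i))
    (A : ℕ → ℕ) (hA : StrictMono A) :
    (Real.log N : EReal) ≤ sepEnt f A univ :=
  sepEnt_coupled_expanding_general f N hN V hne hcl hdisj hexp A hA
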